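/- arXiv:1911.00579 — 2 statements merged into one kernel-verified Lean document; each statement's English description precedes it below -/
import Mathlib

section
/- Let Φ be an ℝ-linear map on the space of n×n real symmetric matrices. Then Φ is doubly stochastic — i.e., Φ maps positive semidefinite matrices to positive semidefinite matrices, Φ(I) = I, and tr(Φ(X)) = tr(X) for all symmetric X — if and only if Φ(X) is majorized by X for every n×n real symmetric matrix X. -/
open Matrix

/-- `v` is majorized by `w`: for every `k`, the sum of the `k` largest entries of `v`
is at most the sum of the `k` largest entries of `w`, with equality for `k = n`.
Stated equivalently: every subset sum of `v` is dominated by some subset sum of `w`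
of the same cardinality, and the total sums agree. -/
def VecMajorizedBy {ι : Type*} [Fintype ι] (v w : ι → ℝ) : Prop :=
  (∀ s : Finset ι, ∃ t : Finset ι, t.card = s.card ∧ ∑ i ∈ s, v i ≤ ∑ i ∈ t, w i) ∧
    ∑ i, v i = ∑ i, w i

/-- `X` is majorized by `Y`: both are (real) symmetric and the eigenvalue vector of `X`
is majorized by the eigenvalue vector of `Y`. -/
def MatMajorizedBy {ι : Type*} [Fintype ι] [DecidableEq ι]
    (X Y : Matrix ι ι ℝ) : Prop :=
  ∃ (hX : X.IsHermitian) (hY : Y.IsHermitian),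
    VecMajorizedBy hX.eigenvalues hY.eigenvalues

/-!
Write `X = ∑ᵢ λᵢ uᵢuᵢ*` and let `vⱼ` be orthonormal eigenvectors of `Φ X` with eigenvalues `μⱼ`.
Then `μ = D λ` with `Dⱼᵢ = ⟪vⱼ, Φ(uᵢuᵢ*) vⱼ⟫`: positivity of `Φ` makes `D` nonnegative, `Φ 1 = 1`
makes its rows sum to one and trace preservation its columns, so `D` is doubly stochastic, and
a doubly stochastic matrix maps `λ` to a vector majorized by `λ`. Conversely, `Φ X ≺ X` gives
equal traces, nonnegative eigenvalues of `Φ X` when those of `X` are nonnegative, and, since a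
vector majorized by a constant vector equals it, `Φ 1 = 1`.
-/

open Finset
open scoped ComplexOrder

section Majorization

variable {ι : Type*} [Fintype ι]

theorem exists_card_eq_forall_le_of_notMem [DecidableEq ι] (f : ι → ℝ) {k : ℕ}
    (hk : k ≤ Fintype.card ι) :
    ∃ t : Finset ι, #t = k ∧ ∀ i ∈ t, ∀ j ∉ t, f j ≤ f i := by
  obtain ⟨t, ht, htmax⟩ := exists_max_image (univ.powersetCard k) (fun t => ∑ i ∈ t, f i)
    (powersetCard_nonempty.mpr (by simpa using hk))
  have htk : #t = k := (mem_powersetCard.mp ht).2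
  refine ⟨t, htk, fun i hi j hj => not_lt.mp fun hij => ?_⟩
  have hji : j ∉ t.erase i := fun h => hj (mem_of_mem_erase h)
  have hswap : insert j (t.erase i) ∈ univ.powersetCard k := by
    rw [mem_powersetCard, card_insert_of_notMem hji, card_erase_of_mem hi, htk]
    have := card_pos.mpr ⟨i, hi⟩
    exact ⟨subset_univ _, by omega⟩
  have := htmax _ hswap
  rw [sum_insert hji, sum_erase_eq_sub hi] at this
  linarith

theorem exists_card_eq_sum_mul_le_sum (c f : ι → ℝ) {k : ℕ} (hc0 : ∀ i, 0 ≤ c i)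
    (hc1 : ∀ i, c i ≤ 1) (hck : ∑ i, c i = k) :
    ∃ t : Finset ι, #t = k ∧ ∑ i, c i * f i ≤ ∑ i ∈ t, f i := by
  classical
  have hk : k ≤ Fintype.card ι := by
    have : (k : ℝ) ≤ Fintype.card ι := by
      simpa [← hck] using sum_le_sum fun i (_ : i ∈ univ) => hc1 i
    exact_mod_cast this
  obtain ⟨t, htk, hsep⟩ := exists_card_eq_forall_le_of_notMem f hk
  refine ⟨t, htk, ?_⟩
  rcases t.eq_empty_or_nonempty with rfl | htne
  · have hc : ∀ i ∈ univ, c i = 0 :=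
      (sum_eq_zero_iff_of_nonneg fun i _ => hc0 i).mp (by simp [hck, ← htk])
    simp [hc]
  -- the threshold `m` separates `f` on `t` from `f` on `tᶜ`, so both sums below are nonnegative
  set m := t.inf' htne f
  have hsplit : ∑ i ∈ t, c i + ∑ i ∈ tᶜ, c i = #t := by rw [sum_add_sum_compl, hck, htk]
  have key : ∑ i ∈ t, f i - ∑ i, c i * f i =
      ∑ i ∈ t, (1 - c i) * (f i - m) + ∑ i ∈ tᶜ, c i * (m - f i) := by
    rw [← sum_add_sum_compl t fun i => c i * f i]
    simp only [sub_mul, one_mul, mul_sub, sum_sub_distrib, ← sum_mul, sum_const, nsmul_eq_mul]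
    linear_combination (-m) * hsplit
  have hin : 0 ≤ ∑ i ∈ t, (1 - c i) * (f i - m) := sum_nonneg fun i hi =>
    mul_nonneg (sub_nonneg.mpr (hc1 i)) (sub_nonneg.mpr (inf'_le f hi))
  have hout : 0 ≤ ∑ i ∈ tᶜ, c i * (m - f i) := sum_nonneg fun j hj =>
    mul_nonneg (hc0 j) (sub_nonneg.mpr ((le_inf'_iff htne f).mpr fun i hi =>
      hsep i hi j (mem_compl.mp hj)))
  linarith

theorem vecMajorizedBy_mulVec_of_mem_doublyStochastic [DecidableEq ι] {D : Matrix ι ι ℝ}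
    (hD : D ∈ doublyStochastic ℝ ι) (w : ι → ℝ) : VecMajorizedBy (D *ᵥ w) w := by
  obtain ⟨hD0, hrow, hcol⟩ := mem_doublyStochastic_iff_sum.mp hD
  refine ⟨fun s => ?_, ?_⟩
  · obtain ⟨t, ht, hle⟩ := exists_card_eq_sum_mul_le_sum (k := #s) (fun i => ∑ j ∈ s, D j i) w
      (fun i => sum_nonneg fun j _ => hD0 j i)
      (fun i => (sum_le_univ_sum_of_nonneg fun j => hD0 j i).trans_eq (hcol i))
      (by rw [sum_comm]; simp [hrow])
    refine ⟨t, ht, ?_⟩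
    simpa [mulVec, dotProduct, sum_mul, sum_comm (s := s)] using hle
  · simp [mulVec, dotProduct, sum_comm (s := (univ : Finset ι)) (t := univ), ← sum_mul, hcol]

theorem VecMajorizedBy.nonneg {v w : ι → ℝ} (h : VecMajorizedBy v w) (hw : 0 ≤ w) : 0 ≤ v := by
  classical
  intro i
  obtain ⟨t, -, ht⟩ := h.1 {i}ᶜ
  have := sum_le_univ_sum_of_nonneg (s := t) hw
  have := h.2
  rw [← sum_compl_add_sum {i}, sum_singleton] at this
  simp only [Pi.zero_apply]
  linarith

theorem VecMajorizedBy.eq_const {v : ι → ℝ} {c : ℝ} (h : VecMajorizedBy v fun _ => c) :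
    v = fun _ => c := by
  have hle : ∀ i, v i ≤ c := fun i => by
    obtain ⟨t, ht, hvt⟩ := h.1 {i}
    simpa [ht] using hvt
  funext i
  exact (sum_eq_sum_iff_of_le fun i _ => hle i).mp h.2 i (mem_univ i)

end Majorization

section Spectral

variable {𝕜 ι : Type*} [RCLike 𝕜] [Fintype ι]

theorem OrthonormalBasis.star_dotProduct_self (b : OrthonormalBasis ι 𝕜 (EuclideanSpace 𝕜 ι))
    (i : ι) : star ⇑(b i) ⬝ᵥ ⇑(b i) = 1 := by
  simp [dotProduct_comm, ← EuclideanSpace.inner_eq_star_dotProduct]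

variable [DecidableEq ι]

theorem OrthonormalBasis.sum_vecMulVec_self_star_eq_one
    (b : OrthonormalBasis ι 𝕜 (EuclideanSpace 𝕜 ι)) :
    ∑ i, vecMulVec ⇑(b i) (star ⇑(b i)) = 1 := by
  ext a c
  have := b.sum_inner_mul_inner (EuclideanSpace.single a 1) (EuclideanSpace.single c 1)
  simp only [EuclideanSpace.inner_single_left, EuclideanSpace.inner_single_right, map_one,
    one_mul] at this
  simpa [Matrix.sum_apply, vecMulVec_apply, one_apply, eq_comm] using this

theorem OrthonormalBasis.sum_star_dotProduct_mulVec_eq_trace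
    (b : OrthonormalBasis ι 𝕜 (EuclideanSpace 𝕜 ι)) (M : Matrix ι ι 𝕜) :
    ∑ i, star ⇑(b i) ⬝ᵥ (M *ᵥ ⇑(b i)) = M.trace := by
  conv_rhs => rw [← M.mul_one, ← b.sum_vecMulVec_self_star_eq_one, mul_sum, trace_sum]
  simp [mul_vecMulVec, dotProduct_comm]

namespace Matrix.IsHermitian

variable {A : Matrix ι ι 𝕜}

theorem eq_sum_eigenvalues_smul_vecMulVec (hA : A.IsHermitian) :
    A = ∑ i, hA.eigenvalues i •
      vecMulVec ⇑(hA.eigenvectorBasis i) (star ⇑(hA.eigenvectorBasis i)) := by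
  conv_lhs => rw [hA.spectral_theorem]
  ext a c
  simp [Unitary.conjStarAlgAut_apply, mul_apply, diagonal_apply, Matrix.sum_apply,
    vecMulVec_apply, RCLike.real_smul_eq_coe_mul, mul_comm, mul_left_comm, mul_assoc]

theorem eigenvalues_eq_one_iff (hA : A.IsHermitian) : hA.eigenvalues = 1 ↔ A = 1 := by
  refine ⟨fun h ↦ ?_, fun h ↦ ?_⟩
  · rw [hA.spectral_theorem, h]
    simp
  · subst h
    funext i
    simp [hA.eigenvalues_eq, dotProduct_comm, ← EuclideanSpace.inner_eq_star_dotProduct]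

end Matrix.IsHermitian

theorem exists_mem_doublyStochastic_eigenvalues_eq_mulVec
    (Φ : selfAdjoint (Matrix ι ι 𝕜) →ₗ[ℝ] selfAdjoint (Matrix ι ι 𝕜))
    (hpos : ∀ X : selfAdjoint (Matrix ι ι 𝕜),
      (X : Matrix ι ι 𝕜).PosSemidef → (Φ X : Matrix ι ι 𝕜).PosSemidef)
    (hunit : (Φ 1 : Matrix ι ι 𝕜) = 1)
    (htrace : ∀ X, (Φ X : Matrix ι ι 𝕜).trace = (X : Matrix ι ι 𝕜).trace)
    {X : selfAdjoint (Matrix ι ι 𝕜)} (hX : (X : Matrix ι ι 𝕜).IsHermitian)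
    (hY : (Φ X : Matrix ι ι 𝕜).IsHermitian) :
    ∃ D ∈ doublyStochastic ℝ ι, hY.eigenvalues = D *ᵥ hX.eigenvalues := by
  set u := hX.eigenvectorBasis
  set v := hY.eigenvectorBasis
  set lam := hX.eigenvalues
  let P (i : ι) : selfAdjoint (Matrix ι ι 𝕜) :=
    ⟨vecMulVec ⇑(u i) (star ⇑(u i)), (posSemidef_vecMulVec_self_star _).isHermitian⟩
  let D : Matrix ι ι ℝ :=
    of fun j i => RCLike.re (star ⇑(v j) ⬝ᵥ ((Φ (P i) : Matrix ι ι 𝕜) *ᵥ ⇑(v j)))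
  have hP_sum : ∑ i, P i = 1 := by
    ext1
    rw [AddSubmonoidClass.coe_finsetSum]
    exact u.sum_vecMulVec_self_star_eq_one
  have hΦX : (Φ X : Matrix ι ι 𝕜) = ∑ i, lam i • (Φ (P i) : Matrix ι ι 𝕜) := by
    have hX_eq : X = ∑ i, lam i • P i := by
      ext1
      rw [AddSubmonoidClass.coe_finsetSum]
      exact hX.eq_sum_eigenvalues_smul_vecMulVec
    rw [hX_eq, map_sum, AddSubmonoidClass.coe_finsetSum]
    simp only [map_smul, selfAdjoint.val_smul]
  refine ⟨D, mem_doublyStochastic_iff_sum.mpr ⟨fun j i => ?_, fun j => ?_, fun i => ?_⟩, ?_⟩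
  · exact (RCLike.nonneg_iff.mp
      ((hpos (P i) (posSemidef_vecMulVec_self_star _)).dotProduct_mulVec_nonneg _)).1
  · calc ∑ i, D j i = RCLike.re (star ⇑(v j) ⬝ᵥ ((Φ (∑ i, P i) : Matrix ι ι 𝕜) *ᵥ ⇑(v j))) := by
          simp only [D, of_apply, map_sum, AddSubmonoidClass.coe_finsetSum, sum_mulVec,
            dotProduct_sum]
      _ = 1 := by rw [hP_sum, hunit, one_mulVec, v.star_dotProduct_self, RCLike.one_re]
  · calc ∑ j, D j i = RCLike.re (Φ (P i) : Matrix ι ι 𝕜).trace := by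
          simp only [D, of_apply, ← map_sum, v.sum_star_dotProduct_mulVec_eq_trace]
      _ = RCLike.re (P i : Matrix ι ι 𝕜).trace := by rw [htrace]
      _ = 1 := by rw [trace_vecMulVec, dotProduct_comm, u.star_dotProduct_self, RCLike.one_re]
  · funext j
    rw [hY.eigenvalues_eq]
    change RCLike.re (star ⇑(v j) ⬝ᵥ ((Φ X : Matrix ι ι 𝕜) *ᵥ ⇑(v j))) = _
    rw [hΦX]
    simp only [sum_mulVec, dotProduct_sum, smul_mulVec, dotProduct_smul, map_sum,
      RCLike.smul_re]
    simp only [mulVec, dotProduct, D, of_apply]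
    exact sum_congr rfl fun i _ => mul_comm _ _

end Spectral

/-- A linear map `Φ` on the space of `n × n` real symmetric matrices is doubly stochastic
(positive, unital, trace preserving) if and only if `Φ X` is majorized by `X` for all
symmetric `X`. -/
theorem doublyStochastic_iff_majorized {n : ℕ}
    (Φ : selfAdjoint (Matrix (Fin n) (Fin n) ℝ) →ₗ[ℝ] selfAdjoint (Matrix (Fin n) (Fin n) ℝ)) :
    ((∀ X : selfAdjoint (Matrix (Fin n) (Fin n) ℝ),
        (X : Matrix (Fin n) (Fin n) ℝ).PosSemidef → (Φ X : Matrix (Fin n) (Fin n) ℝ).PosSemidef) ∧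
      (Φ 1 : Matrix (Fin n) (Fin n) ℝ) = 1 ∧
      (∀ X : selfAdjoint (Matrix (Fin n) (Fin n) ℝ),
        (Φ X : Matrix (Fin n) (Fin n) ℝ).trace = (X : Matrix (Fin n) (Fin n) ℝ).trace)) ↔
    ∀ X : selfAdjoint (Matrix (Fin n) (Fin n) ℝ),
      MatMajorizedBy (Φ X : Matrix (Fin n) (Fin n) ℝ) (X : Matrix (Fin n) (Fin n) ℝ) := by
  refine ⟨fun ⟨hpos, hunit, htrace⟩ X => ?_, fun h => ⟨fun X hX => ?_, ?_, fun X => ?_⟩⟩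
  · have hX : (X : Matrix (Fin n) (Fin n) ℝ).IsHermitian := X.2
    have hY : (Φ X : Matrix (Fin n) (Fin n) ℝ).IsHermitian := (Φ X).2
    obtain ⟨D, hD, hμ⟩ := exists_mem_doublyStochastic_eigenvalues_eq_mulVec Φ hpos hunit htrace hX hY
    exact ⟨hY, hX, hμ ▸ vecMajorizedBy_mulVec_of_mem_doublyStochastic hD _⟩
  · obtain ⟨hY, _, hmaj⟩ := h X
    exact hY.posSemidef_iff_eigenvalues_nonneg.mpr (hmaj.nonneg hX.eigenvalues_nonneg)
  · obtain ⟨hY, h1, hmaj⟩ := h 1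
    rw [h1.eigenvalues_eq_one_iff.mpr selfAdjoint.val_one] at hmaj
    exact hY.eigenvalues_eq_one_iff.mp hmaj.eq_const
  · obtain ⟨hY, hX, hmaj⟩ := h X
    simp [hY.trace_eq_sum_eigenvalues, hX.trace_eq_sum_eigenvalues, hmaj.2]
end

section
/- For all n×n real symmetric matrices A and X, the matrix AXA is majorized by (A²X + XA²)/2. -/
/-!
Write `A = U (diagonal a) Uᵀ`. In the eigenbasis `U` the matrix `AXA` is the Hadamard product
`C ⊙ Y'` of `Y' = Uᵀ ((A²X + XA²)/2) U` with `C i j = 2 a i a j / (a i ^ 2 + a j ^ 2)`. This `C` is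
positive semidefinite, because it solves a Lyapunov equation `DC + CD ⪰ 0` with `D ≻ 0`, and has
unit diagonal, so `P ↦ C ⊙ P` maps the operator interval `0 ≤ P ≤ 1` to itself, preserves traces
and is self-adjoint for `(P, Q) ↦ tr (P Q)`. Ky Fan's principle finishes the proof: the sum of `k`
eigenvalues of a symmetric `H` is `tr (H P)` for some `0 ≤ P ≤ 1` of trace `k`, and conversely
`tr (H Z)` is at most the sum of some `k` eigenvalues of `H` whenever `0 ≤ Z ≤ 1` has trace `k`.
-/

open Matrix

open Finset Unitary
open scoped MatrixOrder

section Selection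

variable {ι : Type*} [Fintype ι] [DecidableEq ι]

lemma Finset.exists_card_eq_forall_notMem_le (w : ι → ℝ) {k : ℕ} (hk : k ≤ Fintype.card ι) :
    ∃ t : Finset ι, #t = k ∧ ∀ i ∈ t, ∀ j ∉ t, w j ≤ w i := by
  obtain ⟨t₀, -, ht₀⟩ := exists_subset_card_eq (s := (univ : Finset ι)) (by simpa using hk)
  obtain ⟨t, ht, hmax⟩ := exists_max_image {t : Finset ι | #t = k} (fun t ↦ ∑ i ∈ t, w i)
    ⟨t₀, by simpa using ht₀⟩
  simp only [mem_filter, mem_univ, true_and] at ht hmax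
  refine ⟨t, ht, fun i hi j hj ↦ ?_⟩
  have hj' : j ∉ t.erase i := fun h ↦ hj (mem_of_mem_erase h)
  have hswap := hmax (insert j (t.erase i)) <| by
    rw [card_insert_of_notMem hj', card_erase_of_mem hi, ht]
    have := card_pos.2 ⟨i, hi⟩
    omega
  rw [sum_insert hj', sum_erase_eq_sub hi] at hswap
  linarith

lemma Finset.sum_mul_le_sum_of_forall_notMem_le {w q : ι → ℝ} {t : Finset ι}
    (ht : ∀ i ∈ t, ∀ j ∉ t, w j ≤ w i) (hq : ∀ i, q i ∈ Set.Icc 0 1) (hsum : ∑ i, q i = #t) :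
    ∑ i, w i * q i ≤ ∑ i ∈ t, w i := by
  rcases t.eq_empty_or_nonempty with rfl | hne
  · have hq0 : ∀ i, q i = 0 := fun i ↦
      (sum_eq_zero_iff_of_nonneg fun i _ ↦ (hq i).1).1 (by simpa using hsum) i (mem_univ i)
    simp [hq0]
  obtain ⟨i₀, hi₀, hmin⟩ := t.exists_min_image w hne
  set c := w i₀
  have hin : ∑ i ∈ t, (w i - c) * q i ≤ ∑ i ∈ t, (w i - c) :=
    sum_le_sum fun i hi ↦ mul_le_of_le_one_right (by linarith [hmin i hi]) (hq i).2
  have hout : ∑ i ∈ tᶜ, (w i - c) * q i ≤ 0 :=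
    sum_nonpos fun j hj ↦ mul_nonpos_of_nonpos_of_nonneg
      (by linarith [ht i₀ hi₀ j (mem_compl.1 hj)]) (hq j).1
  have key : ∑ i, (w i - c) * q i ≤ ∑ i ∈ t, (w i - c) := by
    rw [← sum_add_sum_compl t]
    linarith
  simp only [sub_mul, sum_sub_distrib, ← mul_sum, hsum, sum_const, nsmul_eq_mul] at key
  linarith

end Selection

lemma map_mem_Icc_zero_one {F R S : Type*} [Semiring R] [PartialOrder R] [Semiring S]
    [PartialOrder S] [FunLike F R S] [OrderHomClass F R S] [RingHomClass F R S] (f : F) {x : R}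
    (hx : x ∈ Set.Icc 0 1) : f x ∈ Set.Icc 0 1 := by
  simpa using (OrderHomClass.mono f).mapsTo_Icc hx

namespace Matrix

section Semiring

variable {m R : Type*} [CommSemiring R]

lemma trace_hadamard_mul [Fintype m] {C : Matrix m m R} (hC : C.IsSymm) (Y P : Matrix m m R) :
    ((C ⊙ Y) * P).trace = (Y * (C ⊙ P)).trace := by
  simp only [trace, diag, mul_apply, hadamard_apply]
  refine sum_congr rfl fun i _ ↦ sum_congr rfl fun j _ ↦ ?_
  rw [hC.apply i j]
  ring

lemma trace_hadamard_of_diag_eq_one [Fintype m] {C : Matrix m m R} (hC : C.diag = 1)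
    (P : Matrix m m R) : (C ⊙ P).trace = P.trace := by
  simp [trace, hadamard_apply, show ∀ i, C i i = 1 from congrFun hC]

end Semiring

lemma trace_conjStarAlgAut {m R : Type*} [Fintype m] [DecidableEq m] [CommRing R] [StarRing R]
    (U : unitaryGroup m R) (Z : Matrix m m R) : (conjStarAlgAut R _ U Z).trace = Z.trace := by
  rw [conjStarAlgAut_apply, trace_mul_cycle, coe_star_mul_self, Matrix.one_mul]

section Icc

variable {m : Type*}

lemma diagonal_mem_Icc_zero_one [DecidableEq m] {d : m → ℝ} (hd : ∀ i, d i ∈ Set.Icc 0 1) :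
    diagonal d ∈ Set.Icc 0 1 := by
  refine ⟨nonneg_iff_posSemidef.2 (PosSemidef.diagonal fun i ↦ (hd i).1), ?_⟩
  rw [le_iff, ← diagonal_one, diagonal_sub]
  exact PosSemidef.diagonal fun i ↦ sub_nonneg.2 (hd i).2

lemma diag_mem_Icc_zero_one [DecidableEq m] {P : Matrix m m ℝ} (hP : P ∈ Set.Icc 0 1) (i : m) :
    P i i ∈ Set.Icc 0 1 := by
  have h := (le_iff.1 hP.2).diag_nonneg (i := i)
  simp only [sub_apply, one_apply_eq] at h
  exact ⟨hP.1.posSemidef.diag_nonneg, by linarith⟩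

lemma hadamard_mem_Icc_zero_one [DecidableEq m] {C P : Matrix m m ℝ} (hC : C.PosSemidef)
    (hCdiag : C.diag = 1) (hP : P ∈ Set.Icc 0 1) : C ⊙ P ∈ Set.Icc 0 1 := by
  refine ⟨(hC.hadamard hP.1.posSemidef).nonneg, ?_⟩
  have h : C ⊙ (1 - P) = 1 - C ⊙ P := by
    rw [eq_sub_iff_add_eq, ← hadamard_add, sub_add_cancel, hadamard_one_eq_one_iff.2 hCdiag]
  exact le_iff.2 (h ▸ hC.hadamard (le_iff.1 hP.2))

end Icc

variable {m : Type*} [Fintype m] [DecidableEq m]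

namespace IsHermitian

variable {H : Matrix m m ℝ} (hH : H.IsHermitian)
include hH

lemma trace_mul_eq_sum_eigenvalues_mul (Z : Matrix m m ℝ) :
    (H * Z).trace = ∑ i, hH.eigenvalues i *
      conjStarAlgAut ℝ _ (star hH.eigenvectorUnitary) Z i i := by
  conv_lhs => rw [hH.spectral_theorem]
  rw [conjStarAlgAut_apply, conjStarAlgAut_star_apply, RCLike.ofReal_real_eq_id,
    Function.id_comp, Matrix.mul_assoc, Matrix.mul_assoc, trace_mul_comm, Matrix.mul_assoc, trace]
  simp [diagonal_mul, Matrix.mul_assoc]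

lemma exists_mem_Icc_sum_eigenvalues_eq_trace_mul (s : Finset m) :
    ∃ P ∈ Set.Icc (0 : Matrix m m ℝ) 1, P.trace = #s ∧
      ∑ i ∈ s, hH.eigenvalues i = (H * P).trace := by
  let d : m → ℝ := fun i ↦ if i ∈ s then 1 else 0
  have hd : ∀ i, d i ∈ Set.Icc 0 1 := fun i ↦ by by_cases hi : i ∈ s <;> simp [d, hi]
  refine ⟨conjStarAlgAut ℝ _ hH.eigenvectorUnitary (diagonal d),
    map_mem_Icc_zero_one _ (diagonal_mem_Icc_zero_one hd), ?_, ?_⟩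
  · rw [trace_conjStarAlgAut, trace_diagonal]
    simp [d]
  · rw [hH.trace_mul_eq_sum_eigenvalues_mul, ← conjStarAlgAut_symm, StarAlgEquiv.symm_apply_apply]
    simp [d]

lemma exists_card_eq_trace_mul_le {Z : Matrix m m ℝ} (hZ : Z ∈ Set.Icc 0 1) {k : ℕ}
    (hk : Z.trace = k) : ∃ t : Finset m, #t = k ∧ (H * Z).trace ≤ ∑ i ∈ t, hH.eigenvalues i := by
  set Z' := conjStarAlgAut ℝ _ (star hH.eigenvectorUnitary) Z
  have hq : ∀ i, Z' i i ∈ Set.Icc 0 1 := diag_mem_Icc_zero_one (map_mem_Icc_zero_one _ hZ)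
  have hsum : ∑ i, Z' i i = k := by
    rw [← hk, ← trace_conjStarAlgAut (star hH.eigenvectorUnitary)]
    rfl
  have hk_le : k ≤ Fintype.card m := by
    have : (k : ℝ) ≤ Fintype.card m := by
      rw [← hsum]
      simpa using sum_le_sum fun i (_ : i ∈ univ) ↦ (hq i).2
    exact_mod_cast this
  obtain ⟨t, htk, ht⟩ := exists_card_eq_forall_notMem_le hH.eigenvalues hk_le
  refine ⟨t, htk, ?_⟩
  rw [hH.trace_mul_eq_sum_eigenvalues_mul]
  exact sum_mul_le_sum_of_forall_notMem_le ht hq (by rw [hsum, htk])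

end IsHermitian

lemma vecMajorizedBy_eigenvalues_of_conj_eq_hadamard {M Y C : Matrix m m ℝ}
    (hM : M.IsHermitian) (hY : Y.IsHermitian) (hC : C.PosSemidef) (hCdiag : C.diag = 1)
    (U : unitaryGroup m ℝ) (h : conjStarAlgAut ℝ _ U M = C ⊙ conjStarAlgAut ℝ _ U Y) :
    VecMajorizedBy hM.eigenvalues hY.eigenvalues := by
  set Φ := conjStarAlgAut ℝ (Matrix m m ℝ) U
  have hΦ : ∀ Z, (Φ Z).trace = Z.trace := trace_conjStarAlgAut U
  have hΦsymm : ∀ Z, (Φ.symm Z).trace = Z.trace := fun Z ↦ by rw [← hΦ, Φ.apply_symm_apply]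
  have hCsymm : C.IsSymm := isHermitian_iff_isSymm.1 hC.isHermitian
  refine ⟨fun s ↦ ?_, ?_⟩
  · obtain ⟨P, hP, hPs, hMP⟩ := hM.exists_mem_Icc_sum_eigenvalues_eq_trace_mul s
    set Z := Φ.symm (C ⊙ Φ P)
    have hZ : Z ∈ Set.Icc 0 1 :=
      map_mem_Icc_zero_one _ (hadamard_mem_Icc_zero_one hC hCdiag (map_mem_Icc_zero_one _ hP))
    have hZs : Z.trace = #s := by
      rw [hΦsymm, trace_hadamard_of_diag_eq_one hCdiag, hΦ, hPs]
    obtain ⟨t, ht, hYZ⟩ := hY.exists_card_eq_trace_mul_le hZ hZs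
    refine ⟨t, ht, ?_⟩
    calc ∑ i ∈ s, hM.eigenvalues i = (Φ M * Φ P).trace := by
          rw [hMP, ← map_mul, hΦ]
      _ = (Φ Y * Φ Z).trace := by
          rw [h, trace_hadamard_mul hCsymm, StarAlgEquiv.apply_symm_apply]
      _ = (Y * Z).trace := by rw [← map_mul, hΦ]
      _ ≤ ∑ i ∈ t, hY.eigenvalues i := hYZ
  · have htr : M.trace = Y.trace := by
      rw [← hΦ, h, trace_hadamard_of_diag_eq_one hCdiag, hΦ]
    simpa [hM.trace_eq_sum_eigenvalues, hY.trace_eq_sum_eigenvalues] using htr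

lemma PosSemidef.of_posDef_of_mul_add_mul {C D : Matrix m m ℝ} (hC : C.IsHermitian)
    (hD : D.PosDef) (h : (D * C + C * D).PosSemidef) : C.PosSemidef := by
  refine hC.posSemidef_iff_eigenvalues_nonneg.2 fun i ↦ ?_
  set v : m → ℝ := ⇑(hC.eigenvectorBasis i)
  set μ := hC.eigenvalues i
  have hv : C *ᵥ v = μ • v := hC.mulVec_eigenvectorBasis i
  have hv0 : v ≠ 0 := (WithLp.ofLp_eq_zero 2).ne.2 (hC.eigenvectorBasis.orthonormal.ne_zero i)
  have hCsymm : v ᵥ* C = C *ᵥ v := by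
    rw [← vecMul_transpose, ← conjTranspose_eq_transpose_of_trivial, hC.eq]
  have hquad : v ⬝ᵥ (D * C + C * D) *ᵥ v = 2 * μ * (v ⬝ᵥ D *ᵥ v) := by
    rw [add_mulVec, ← mulVec_mulVec, ← mulVec_mulVec, dotProduct_add, dotProduct_mulVec v C,
      hCsymm, hv, mulVec_smul, dotProduct_smul, smul_dotProduct, smul_eq_mul]
    ring
  have hpos : 0 < v ⬝ᵥ D *ᵥ v := by simpa using hD.dotProduct_mulVec_pos hv0
  have hnn : 0 ≤ v ⬝ᵥ (D * C + C * D) *ᵥ v := by simpa using h.dotProduct_mulVec_nonneg v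
  show 0 ≤ μ
  nlinarith

section LyapunovKernel

variable {m : Type*} (a : m → ℝ)

/-- For `A = diagonal a`, the entries of `AXA` are those of `(A²X + XA²)/2` multiplied by this
kernel. Where `a i = a j = 0` both entries vanish; the value `1` there keeps the diagonal equal to
one and the matrix positive semidefinite. -/
noncomputable def lyapunovKernel : Matrix m m ℝ :=
  of fun i j ↦ if a i = 0 ∧ a j = 0 then 1 else 2 * a i * a j / (a i ^ 2 + a j ^ 2)

lemma sq_add_sq_mul_lyapunovKernel (i j : m) :
    (a i ^ 2 + a j ^ 2) * lyapunovKernel a i j = 2 * a i * a j := by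
  by_cases h : a i = 0 ∧ a j = 0
  · simp [lyapunovKernel, h]
  · have hs : a i ^ 2 + a j ^ 2 ≠ 0 := by rwa [sq, sq, Ne, mul_self_add_mul_self_eq_zero]
    simp [lyapunovKernel, h, mul_div_cancel₀ _ hs]

lemma diag_lyapunovKernel : (lyapunovKernel a).diag = 1 := by
  ext i
  by_cases h : a i = 0
  · simp [lyapunovKernel, h]
  · have hsq := sq_pos_of_ne_zero h
    refine mul_left_cancel₀ (add_pos hsq hsq).ne' ?_
    rw [diag_apply, sq_add_sq_mul_lyapunovKernel, Pi.one_apply]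
    ring

lemma isSymm_lyapunovKernel : (lyapunovKernel a).IsSymm := by
  ext i j
  simp only [lyapunovKernel, transpose_apply, of_apply]
  exact if_congr and_comm rfl (by ring)

lemma posSemidef_lyapunovKernel [Fintype m] [DecidableEq m] : (lyapunovKernel a).PosSemidef := by
  let e : m → ℝ := fun i ↦ if a i = 0 then 1 else 0
  let d : m → ℝ := fun i ↦ a i ^ 2 + e i
  have hd : (diagonal d).PosDef := posDef_diagonal_iff.2 fun i ↦ by
    by_cases h : a i = 0 <;> simp [d, e, h, sq_pos_of_ne_zero]
  have hlyap : diagonal d * lyapunovKernel a + lyapunovKernel a * diagonal d =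
      (2 : ℝ) • (vecMulVec a a + vecMulVec e e) := by
    ext i j
    simp only [add_apply, diagonal_mul, mul_diagonal, smul_apply, vecMulVec_apply, smul_eq_mul]
    by_cases hi : a i = 0 <;> by_cases hj : a j = 0 <;>
      simp [lyapunovKernel, d, e, hi, hj, one_add_one_eq_two]
    have := sq_add_sq_mul_lyapunovKernel a i j
    simp only [lyapunovKernel, hi, hj, and_self, if_false, of_apply] at this
    linear_combination this
  refine PosSemidef.of_posDef_of_mul_add_mul (isHermitian_iff_isSymm.2 (isSymm_lyapunovKernel a))
    hd ?_
  rw [hlyap]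
  exact ((posSemidef_vecMulVec_self_star a).add (posSemidef_vecMulVec_self_star e)).smul
    zero_le_two

lemma diagonal_mul_mul_diagonal_eq_lyapunovKernel_hadamard [Fintype m] [DecidableEq m]
    (X : Matrix m m ℝ) :
    diagonal a * X * diagonal a =
      lyapunovKernel a ⊙ ((2 : ℝ)⁻¹ • (diagonal a ^ 2 * X + X * diagonal a ^ 2)) := by
  ext i j
  simp only [diagonal_pow, diagonal_mul, mul_diagonal, hadamard_apply, smul_apply, add_apply,
    Pi.pow_apply, smul_eq_mul]
  linear_combination (-(2 : ℝ)⁻¹ * X i j) * sq_add_sq_mul_lyapunovKernel a i j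

end LyapunovKernel

end Matrix

/-- For all real symmetric matrices `A` and `X`, the matrix `A * X * A` is majorized by
`(A²X + XA²)/2`. -/
theorem quadratic_majorized_lyapunov {n : ℕ}
    (A X : Matrix (Fin n) (Fin n) ℝ) (hA : A.IsHermitian) (hX : X.IsHermitian) :
    MatMajorizedBy (A * X * A) ((2 : ℝ)⁻¹ • (A ^ 2 * X + X * A ^ 2)) := by
  have hM : (A * X * A).IsHermitian := by
    simpa only [hA.eq] using isHermitian_conjTranspose_mul_mul A hX
  have hY : ((2 : ℝ)⁻¹ • (A ^ 2 * X + X * A ^ 2)).IsHermitian := by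
    refine IsHermitian.smul ?_ (.all _)
    have := isHermitian_add_transpose_self (A ^ 2 * X)
    rwa [conjTranspose_mul, (hA.pow 2).eq, hX.eq] at this
  have hD : conjStarAlgAut ℝ _ (star hA.eigenvectorUnitary) A = diagonal hA.eigenvalues := by
    simpa using hA.conjStarAlgAut_star_eigenvectorUnitary
  refine ⟨hM, hY, vecMajorizedBy_eigenvalues_of_conj_eq_hadamard hM hY
    (posSemidef_lyapunovKernel hA.eigenvalues) (diag_lyapunovKernel _)
    (star hA.eigenvectorUnitary) ?_⟩
  simp only [map_mul, map_add, map_smul, map_pow, hD]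
  exact diagonal_mul_mul_diagonal_eq_lyapunovKernel_hadamard _ _
end
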